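/- arXiv:0808.3219 — 2 statements merged into one kernel-verified Lean document; each statement's English description precedes it below -/
import Mathlib

section
/- If W is a C² solution of W_z̄ = −(s(x)j/2) conj(W) with s continuously differentiable, then the function w := W_z + (s(x)j/2) conj(W) satisfies w_z̄ = (s(x)j/2) conj(w). -/
/-- Hyperbolic (split-complex / duplex) numbers `x + j t`, with `j ^ 2 = 1`. -/
structure Hyp where
  re : ℝ
  im : ℝ

namespace Hyp

instance : Zero Hyp := ⟨⟨0, 0⟩⟩
instance : One Hyp := ⟨⟨1, 0⟩⟩
instance : Add Hyp := ⟨fun z w => ⟨z.re + w.re, z.im + w.im⟩⟩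
instance : Neg Hyp := ⟨fun z => ⟨-z.re, -z.im⟩⟩
instance : Sub Hyp := ⟨fun z w => ⟨z.re - w.re, z.im - w.im⟩⟩
/-- multiplication determined by `j ^ 2 = 1` -/
instance : Mul Hyp := ⟨fun z w => ⟨z.re * w.re + z.im * w.im, z.re * w.im + z.im * w.re⟩⟩
instance : SMul ℝ Hyp := ⟨fun r z => ⟨r * z.re, r * z.im⟩⟩

/-- the hyperbolic imaginary unit `j` -/
def j : Hyp := ⟨0, 1⟩

/-- hyperbolic conjugation `conj (x + j t) = x - j t` -/
def conj (z : Hyp) : Hyp := ⟨z.re, -z.im⟩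

/-- the (total) inverse; for non-invertible elements it returns junk -/
noncomputable instance : Inv Hyp := ⟨fun z => ⟨z.re / (z.re ^ 2 - z.im ^ 2), -z.im / (z.re ^ 2 - z.im ^ 2)⟩⟩
noncomputable instance : Div Hyp := ⟨fun z w => z * w⁻¹⟩

end Hyp

/-- partial derivative in the `x`-direction -/
noncomputable def px (f : ℝ × ℝ → ℝ) (p : ℝ × ℝ) : ℝ := fderiv ℝ f p (1, 0)

/-- partial derivative in the `t`-direction -/
noncomputable def pt (f : ℝ × ℝ → ℝ) (p : ℝ × ℝ) : ℝ := fderiv ℝ f p (0, 1)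

/-- real part of a hyperbolic-valued function -/
def reP (f : ℝ × ℝ → Hyp) : ℝ × ℝ → ℝ := fun q => (f q).re
/-- imaginary (`j`) part of a hyperbolic-valued function -/
def imP (f : ℝ × ℝ → Hyp) : ℝ × ℝ → ℝ := fun q => (f q).im

/-- `∂_z̄ = (1/2)(∂_x - j ∂_t)` acting on `f = u + j v`:
`(1/2)((u_x - v_t) + j (v_x - u_t))`. -/
noncomputable def dzbar (f : ℝ × ℝ → Hyp) (p : ℝ × ℝ) : Hyp :=
  ⟨(px (reP f) p - pt (imP f) p) / 2, (px (imP f) p - pt (reP f) p) / 2⟩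

/-- `∂_z = (1/2)(∂_x + j ∂_t)` acting on `f = u + j v`:
`(1/2)((u_x + v_t) + j (v_x + u_t))`. -/
noncomputable def dz (f : ℝ × ℝ → Hyp) (p : ℝ × ℝ) : Hyp :=
  ⟨(px (reP f) p + pt (imP f) p) / 2, (px (imP f) p + pt (reP f) p) / 2⟩

/-- `∂_z̄` of a real-valued function, as a hyperbolic number. -/
noncomputable def dzbarR (φ : ℝ × ℝ → ℝ) (p : ℝ × ℝ) : Hyp :=
  ⟨px φ p / 2, -(pt φ p) / 2⟩

/-- a function is C¹ (componentwise) -/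
def HC1 (f : ℝ × ℝ → Hyp) : Prop := ContDiff ℝ 1 (reP f) ∧ ContDiff ℝ 1 (imP f)

/-- characteristic coefficient `a_{(F,G)}` -/
noncomputable def charA (F G : ℝ × ℝ → Hyp) (p : ℝ × ℝ) : Hyp :=
  -((Hyp.conj (F p) * dzbar G p - dzbar F p * Hyp.conj (G p)) /
    (F p * Hyp.conj (G p) - Hyp.conj (F p) * G p))

/-- characteristic coefficient `b_{(F,G)}` -/
noncomputable def charB (F G : ℝ × ℝ → Hyp) (p : ℝ × ℝ) : Hyp :=
  (F p * dzbar G p - dzbar F p * G p) /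
    (F p * Hyp.conj (G p) - Hyp.conj (F p) * G p)

/-- characteristic coefficient `A_{(F,G)}` -/
noncomputable def charCapA (F G : ℝ × ℝ → Hyp) (p : ℝ × ℝ) : Hyp :=
  -((Hyp.conj (F p) * dz G p - dz F p * Hyp.conj (G p)) /
    (F p * Hyp.conj (G p) - Hyp.conj (F p) * G p))

/-- characteristic coefficient `B_{(F,G)}` -/
noncomputable def charCapB (F G : ℝ × ℝ → Hyp) (p : ℝ × ℝ) : Hyp :=
  (F p * dz G p - dz F p * G p) /
    (F p * Hyp.conj (G p) - Hyp.conj (F p) * G p)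

/-!
Write `W = u + j v`. The Vekua equation says `u_x = v_t + s v` and `v_x = u_t - s u`, and
substituting these into `w = W_z + (s j / 2) conj W` leaves `w = j W_t`. Since partial
derivatives of a C² function commute, `w_z̄ = j (W_z̄)_t = j (-(s j / 2) conj W)_t`, and because
`s` depends on `x` only this is `-(s / 2) conj W_t = (s j / 2) conj (j W_t) = (s j / 2) conj w`.
-/

open Filter Topology

namespace Hyp

@[ext]
lemma ext {z w : Hyp} (hre : z.re = w.re) (him : z.im = w.im) : z = w := by
  cases z; cases w; simp_all

@[simp] lemma add_re (z w : Hyp) : (z + w).re = z.re + w.re := rfl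
@[simp] lemma add_im (z w : Hyp) : (z + w).im = z.im + w.im := rfl
@[simp] lemma mul_re (z w : Hyp) : (z * w).re = z.re * w.re + z.im * w.im := rfl
@[simp] lemma mul_im (z w : Hyp) : (z * w).im = z.re * w.im + z.im * w.re := rfl
@[simp] lemma smul_re (r : ℝ) (z : Hyp) : (r • z).re = r * z.re := rfl
@[simp] lemma smul_im (r : ℝ) (z : Hyp) : (r • z).im = r * z.im := rfl
@[simp] lemma conj_re (z : Hyp) : (conj z).re = z.re := rfl
@[simp] lemma conj_im (z : Hyp) : (conj z).im = -z.im := rfl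
@[simp] lemma j_re : j.re = 0 := rfl
@[simp] lemma j_im : j.im = 1 := rfl

lemma j_mul_smul_j_mul_conj (r : ℝ) (z : Hyp) :
    j * (-r • (j * conj z)) = (r • j) * conj (j * z) := by
  ext <;> simp

end Hyp

noncomputable def dt (f : ℝ × ℝ → Hyp) (p : ℝ × ℝ) : Hyp :=
  ⟨pt (reP f) p, pt (imP f) p⟩

section PartialDerivatives

variable {f g : ℝ × ℝ → ℝ} {p : ℝ × ℝ}

lemma Filter.EventuallyEq.px_eq (h : f =ᶠ[𝓝 p] g) : px f p = px g p := by
  rw [px, px, h.fderiv_eq]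

lemma Filter.EventuallyEq.pt_eq (h : f =ᶠ[𝓝 p] g) : pt f p = pt g p := by
  rw [pt, pt, h.fderiv_eq]

lemma pt_sub_div (hf : DifferentiableAt ℝ f p) (hg : DifferentiableAt ℝ g p) (c : ℝ) :
    pt (fun q => (f q - g q) / c) p = (pt f p - pt g p) / c := by
  simp only [pt, div_eq_mul_inv]
  rw [fderiv_mul_const (hf.fun_sub hg), fderiv_fun_sub hf hg]
  simp [mul_comm]

lemma pt_mul_comp_fst {s : ℝ → ℝ} (hs : DifferentiableAt ℝ s p.1) (hf : DifferentiableAt ℝ f p) :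
    pt (fun q => s q.1 * f q) p = s p.1 * pt f p := by
  have hsx : DifferentiableAt ℝ (fun q : ℝ × ℝ => s q.1) p := hs.comp p differentiableAt_fst
  rw [pt, fderiv_fun_mul hsx hf, show (fun q : ℝ × ℝ => s q.1) = s ∘ Prod.fst from rfl,
    fderiv_comp p hs differentiableAt_fst, fderiv_fst]
  simp [pt]

lemma differentiableAt_fderiv_apply (hf : ContDiffAt ℝ 2 f p) (v : ℝ × ℝ) :
    DifferentiableAt ℝ (fun q => fderiv ℝ f q v) p :=
  ((hf.fderiv_right (m := 1) le_rfl).differentiableAt one_ne_zero).clm_apply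
    (differentiableAt_const v)

lemma px_pt_comm (hf : ContDiffAt ℝ 2 f p) : px (pt f) p = pt (px f) p := by
  have hdf := (hf.fderiv_right (m := 1) le_rfl).differentiableAt one_ne_zero
  unfold px pt
  rw [fderiv_clm_apply hdf (differentiableAt_const _),
    fderiv_clm_apply hdf (differentiableAt_const _)]
  simpa using hf.isSymmSndFDerivAt (by simp) (1, 0) (0, 1)

end PartialDerivatives

section HyperbolicDerivatives

variable {F G : ℝ × ℝ → Hyp} {p : ℝ × ℝ}

lemma Filter.EventuallyEq.dzbar_eq (h : F =ᶠ[𝓝 p] G) : dzbar F p = dzbar G p := by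
  have hre : reP F =ᶠ[𝓝 p] reP G := h.fun_comp Hyp.re
  have him : imP F =ᶠ[𝓝 p] imP G := h.fun_comp Hyp.im
  rw [dzbar, dzbar, hre.px_eq, hre.pt_eq, him.px_eq, him.pt_eq]

lemma Filter.EventuallyEq.dt_eq (h : F =ᶠ[𝓝 p] G) : dt F p = dt G p := by
  have hre : reP F =ᶠ[𝓝 p] reP G := h.fun_comp Hyp.re
  have him : imP F =ᶠ[𝓝 p] imP G := h.fun_comp Hyp.im
  rw [dt, dt, hre.pt_eq, him.pt_eq]

lemma dz_add_smul_j_mul_conj_eq_j_mul_dt {c : ℝ}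
    (h : dzbar F p = (-c / 2) • (Hyp.j * Hyp.conj (F p))) :
    dz F p + ((c / 2) • Hyp.j) * Hyp.conj (F p) = Hyp.j * dt F p := by
  have hre := congrArg Hyp.re h
  have him := congrArg Hyp.im h
  simp only [dzbar, Hyp.smul_re, Hyp.smul_im, Hyp.mul_re, Hyp.mul_im, Hyp.conj_re,
    Hyp.conj_im, Hyp.j_re, Hyp.j_im] at hre him
  ext <;> simp [dz, dt] <;> linarith

lemma dzbar_j_mul_dt (hre : ContDiffAt ℝ 2 (reP F) p) (him : ContDiffAt ℝ 2 (imP F) p) :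
    dzbar (fun q => Hyp.j * dt F q) p = Hyp.j * dt (dzbar F) p := by
  have hjre : reP (fun q => Hyp.j * dt F q) = pt (imP F) := by funext q; simp [reP, dt]
  have hjim : imP (fun q => Hyp.j * dt F q) = pt (reP F) := by funext q; simp [imP, dt]
  have hdre : reP (dzbar F) = fun q => (px (reP F) q - pt (imP F) q) / 2 := rfl
  have hdim : imP (dzbar F) = fun q => (px (imP F) q - pt (reP F) q) / 2 := rfl
  have hpx (f) (hf : ContDiffAt ℝ 2 f p) : DifferentiableAt ℝ (px f) p :=
    differentiableAt_fderiv_apply hf _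
  have hpt (f) (hf : ContDiffAt ℝ 2 f p) : DifferentiableAt ℝ (pt f) p :=
    differentiableAt_fderiv_apply hf _
  rw [dzbar, hjre, hjim, dt, hdre, hdim, pt_sub_div (hpx _ hre) (hpt _ him),
    pt_sub_div (hpx _ him) (hpt _ hre), px_pt_comm hre, px_pt_comm him]
  ext <;> simp

lemma dt_smul_j_mul_conj {s : ℝ → ℝ} (hs : DifferentiableAt ℝ s p.1)
    (hre : DifferentiableAt ℝ (reP F) p) (him : DifferentiableAt ℝ (imP F) p) :
    dt (fun q => (-(s q.1) / 2) • (Hyp.j * Hyp.conj (F q))) p =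
      (-(s p.1) / 2) • (Hyp.j * Hyp.conj (dt F p)) := by
  have hcre : reP (fun q => (-(s q.1) / 2) • (Hyp.j * Hyp.conj (F q))) =
      fun q => s q.1 / 2 * imP F q := by
    funext q; simp [reP, imP]; ring
  have hcim : imP (fun q => (-(s q.1) / 2) • (Hyp.j * Hyp.conj (F q))) =
      fun q => -(s q.1) / 2 * reP F q := by
    funext q; simp [reP, imP]
  rw [dt, hcre, hcim, pt_mul_comp_fst (hs.div_const 2) him,
    pt_mul_comp_fst (s := fun x => -s x / 2) (hs.neg.div_const 2) hre]
  ext <;> simp [dt]; ring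

end HyperbolicDerivatives

/-- if `W` is a C² solution of `W_z̄ = -(s(x) j / 2) conj W`, then
`w := W_z + (s(x) j / 2) conj W` satisfies `w_z̄ = (s(x) j / 2) conj w`. -/
theorem FG_derivative_satisfies_successor_vekua (Ω : Set (ℝ × ℝ)) (hΩ : IsOpen Ω)
    (s : ℝ → ℝ) (hs : ContDiff ℝ 1 s) (W : ℝ × ℝ → Hyp)
    (hWre : ContDiffOn ℝ 2 (reP W) Ω) (hWim : ContDiffOn ℝ 2 (imP W) Ω)
    (hVek : ∀ p ∈ Ω, dzbar W p = (-(s p.1) / 2) • (Hyp.j * Hyp.conj (W p))) :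
    ∀ p ∈ Ω,
      dzbar (fun q => dz W q + ((s q.1 / 2) • Hyp.j) * Hyp.conj (W q)) p =
        ((s p.1 / 2) • Hyp.j) *
          Hyp.conj (dz W p + ((s p.1 / 2) • Hyp.j) * Hyp.conj (W p)) := by
  intro p hp
  have hΩp : Ω ∈ 𝓝 p := hΩ.mem_nhds hp
  have hre : ContDiffAt ℝ 2 (reP W) p := hWre.contDiffAt hΩp
  have him : ContDiffAt ℝ 2 (imP W) p := hWim.contDiffAt hΩp
  have hVek_nhds : dzbar W =ᶠ[𝓝 p] fun q => (-(s q.1) / 2) • (Hyp.j * Hyp.conj (W q)) :=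
    eventually_of_mem hΩp hVek
  have hw : (fun q => dz W q + ((s q.1 / 2) • Hyp.j) * Hyp.conj (W q)) =ᶠ[𝓝 p]
      fun q => Hyp.j * dt W q :=
    eventually_of_mem hΩp fun q hq => dz_add_smul_j_mul_conj_eq_j_mul_dt (hVek q hq)
  rw [hw.dzbar_eq, dzbar_j_mul_dt hre him, hVek_nhds.dt_eq,
    dt_smul_j_mul_conj ((hs.differentiable one_ne_zero) p.1) (hre.differentiableAt two_ne_zero)
      (him.differentiableAt two_ne_zero), hw.eq_of_nhds, neg_div, Hyp.j_mul_smul_j_mul_conj]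
end

section
/- Define the sequence of pairs F_m = cos S(x) + (−1)^{m+1} j sin S(x), G_m = (−1)^m sin S(x) + j cos S(x) for m ∈ ℤ, with S' = s. Then each (F_m, G_m) has Im(conj(F_m)G_m) ≡ 1, and the characteristic coefficients satisfy a_{(F_{m+1},G_{m+1})} = a_{(F_m,G_m)} = 0 and b_{(F_{m+1},G_{m+1})} = −B_{(F_m,G_m)} = (−1)^{m} (s(x)/2) j — i.e., (F_{m+1},G_{m+1}) is a successor of (F_m,G_m), so {(F_m,G_m)} is a generating sequence, and it is periodic with period 2. -/
/-!
Write `θ = S(x)` and `ε = ±1`. The pair `F = cos θ - ε j sin θ`, `G = ε sin θ + j cos θ` depends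
on `x` only, so `∂_z = ∂_z̄ = ½ ∂_x` on it and `B_{(F,G)} = b_{(F,G)}`. Moreover
`F conj G - conj F G = -2 j Im(conj F G) = -2 j`, and a direct computation with
`∂_x F = -s (sin θ + ε j cos θ)`, `∂_x G = s (ε cos θ - j sin θ)` gives `a = 0`, `b = -ε (s/2) j`.
Since `F_m, G_m` is this pair with `ε = (-1)^m`, passing from `m` to `m + 1` flips the sign of
`b`, and passing to `m + 2` leaves the pair itself unchanged.
-/

open Real

namespace Hyp

@[simp] lemma mk_mul_mk (a b c d : ℝ) :
    (⟨a, b⟩ : Hyp) * ⟨c, d⟩ = ⟨a * c + b * d, a * d + b * c⟩ := rfl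

@[simp] lemma mk_sub_mk (a b c d : ℝ) : (⟨a, b⟩ : Hyp) - ⟨c, d⟩ = ⟨a - c, b - d⟩ := rfl

@[simp] lemma neg_mk (a b : ℝ) : -(⟨a, b⟩ : Hyp) = ⟨-a, -b⟩ := rfl

@[simp] lemma conj_mk (a b : ℝ) : conj ⟨a, b⟩ = ⟨a, -b⟩ := rfl

lemma mul_conj_sub_conj_mul (z w : Hyp) : z * conj w - conj z * w = ⟨0, -2 * (conj z * w).im⟩ := by
  obtain ⟨a, b⟩ := z
  obtain ⟨c, d⟩ := w
  simp only [conj_mk, mk_mul_mk, mk_sub_mk, mk.injEq]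
  constructor <;> ring

lemma div_mk_zero_neg_two (z : Hyp) : z / ⟨0, -2⟩ = ⟨-z.im / 2, -z.re / 2⟩ := by
  show z * _ = _
  obtain ⟨a, b⟩ := z
  simp only [Inv.inv, mk_mul_mk, mk.injEq]
  constructor <;> ring

end Hyp

section PartialDerivatives

variable {p : ℝ × ℝ}

lemma px_comp_fst {g : ℝ → ℝ} {g' : ℝ} (hg : HasDerivAt g g' p.1) :
    px (fun q => g q.1) p = g' := by
  have h : HasFDerivAt (fun q : ℝ × ℝ => g q.1) _ p := hg.hasFDerivAt.comp p hasFDerivAt_fst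
  rw [px, h.fderiv]
  simp

lemma pt_comp_fst (g : ℝ → ℝ) : pt (fun q => g q.1) p = 0 := by
  by_cases hg : DifferentiableAt ℝ g p.1
  · have h : HasFDerivAt (fun q : ℝ × ℝ => g q.1) _ p := hg.hasFDerivAt.comp p hasFDerivAt_fst
    rw [pt, h.fderiv]
    simp
  · rw [pt, fderiv_zero_of_not_differentiableAt, zero_apply]
    -- restricting to the line `t = p.2` would make `g` differentiable at `p.1`
    intro hgfst
    have hline : DifferentiableAt ℝ (fun x : ℝ => (x, p.2)) p.1 :=
      differentiableAt_id.prodMk (differentiableAt_const p.2)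
    have hcomp : DifferentiableAt ℝ ((fun q : ℝ × ℝ => g q.1) ∘ fun x => (x, p.2)) p.1 :=
      hgfst.comp (x := p.1) hline
    exact hg hcomp

lemma dzbar_comp_fst {u v : ℝ → ℝ} {u' v' : ℝ} (hu : HasDerivAt u u' p.1)
    (hv : HasDerivAt v v' p.1) : dzbar (fun q => ⟨u q.1, v q.1⟩) p = ⟨u' / 2, v' / 2⟩ := by
  show (⟨(px (fun q => u q.1) p - pt (fun q => v q.1) p) / 2,
    (px (fun q => v q.1) p - pt (fun q => u q.1) p) / 2⟩ : Hyp) = _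
  rw [px_comp_fst hu, px_comp_fst hv, pt_comp_fst, pt_comp_fst, sub_zero, sub_zero]

lemma dz_comp_fst (u v : ℝ → ℝ) :
    dz (fun q => ⟨u q.1, v q.1⟩) p = dzbar (fun q => ⟨u q.1, v q.1⟩) p := by
  show (⟨(px (fun q => u q.1) p + pt (fun q => v q.1) p) / 2,
    (px (fun q => v q.1) p + pt (fun q => u q.1) p) / 2⟩ : Hyp) =
    ⟨(px (fun q => u q.1) p - pt (fun q => v q.1) p) / 2,
    (px (fun q => v q.1) p - pt (fun q => u q.1) p) / 2⟩
  rw [pt_comp_fst, pt_comp_fst, add_zero, add_zero, sub_zero, sub_zero]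

end PartialDerivatives

lemma charCapB_eq_charB {F G : ℝ × ℝ → Hyp} {p : ℝ × ℝ} (hF : dz F p = dzbar F p)
    (hG : dz G p = dzbar G p) : charCapB F G p = charB F G p := by
  rw [charCapB, charB, hF, hG]

noncomputable def rotF (ε : ℝ) (S : ℝ → ℝ) : ℝ × ℝ → Hyp :=
  fun q => ⟨cos (S q.1), -(ε * sin (S q.1))⟩

noncomputable def rotG (ε : ℝ) (S : ℝ → ℝ) : ℝ × ℝ → Hyp :=
  fun q => ⟨ε * sin (S q.1), cos (S q.1)⟩

section RotationPair

variable {ε σ : ℝ} {S : ℝ → ℝ} {p : ℝ × ℝ}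

lemma im_conj_rotF_mul_rotG (hε : ε ^ 2 = 1) :
    (Hyp.conj (rotF ε S p) * rotG ε S p).im = 1 := by
  simp only [rotF, rotG, Hyp.conj_mk, Hyp.mk_mul_mk, neg_neg]
  linear_combination cos_sq_add_sin_sq (S p.1) + sin (S p.1) ^ 2 * hε

lemma rotF_mul_conj_rotG_sub (hε : ε ^ 2 = 1) :
    rotF ε S p * Hyp.conj (rotG ε S p) - Hyp.conj (rotF ε S p) * rotG ε S p = ⟨0, -2⟩ := by
  rw [Hyp.mul_conj_sub_conj_mul, im_conj_rotF_mul_rotG hε, mul_one]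

lemma dzbar_rotF (hS : HasDerivAt S σ p.1) :
    dzbar (rotF ε S) p = ⟨-(sin (S p.1) * σ) / 2, -(ε * (cos (S p.1) * σ)) / 2⟩ := by
  refine (dzbar_comp_fst (u := fun x => cos (S x)) (v := fun x => -(ε * sin (S x))) hS.cos
    (hS.sin.const_mul ε).neg).trans ?_
  simp only [neg_mul]

lemma dzbar_rotG (hS : HasDerivAt S σ p.1) :
    dzbar (rotG ε S) p = ⟨ε * (cos (S p.1) * σ) / 2, -(sin (S p.1) * σ) / 2⟩ := by
  refine (dzbar_comp_fst (u := fun x => ε * sin (S x)) (v := fun x => cos (S x))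
    (hS.sin.const_mul ε) hS.cos).trans ?_
  simp only [neg_mul]

lemma charCapB_rot_eq_charB : charCapB (rotF ε S) (rotG ε S) p = charB (rotF ε S) (rotG ε S) p :=
  charCapB_eq_charB (dz_comp_fst (fun x => cos (S x)) (fun x => -(ε * sin (S x))))
    (dz_comp_fst (fun x => ε * sin (S x)) (fun x => cos (S x)))

lemma charA_rot (hε : ε ^ 2 = 1) (hS : HasDerivAt S σ p.1) :
    charA (rotF ε S) (rotG ε S) p = 0 := by
  rw [charA, rotF_mul_conj_rotG_sub hε, dzbar_rotF hS, dzbar_rotG hS, Hyp.div_mk_zero_neg_two]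
  simp only [rotF, rotG, Hyp.conj_mk, Hyp.mk_mul_mk, Hyp.mk_sub_mk, Hyp.neg_mk]
  show (⟨_, _⟩ : Hyp) = ⟨0, 0⟩
  rw [Hyp.mk.injEq]
  constructor
  · linear_combination (cos (S p.1) * sin (S p.1) * σ / 2) * hε
  · ring

lemma charB_rot (hε : ε ^ 2 = 1) (hS : HasDerivAt S σ p.1) :
    charB (rotF ε S) (rotG ε S) p = ⟨0, -(ε * σ) / 2⟩ := by
  rw [charB, rotF_mul_conj_rotG_sub hε, dzbar_rotF hS, dzbar_rotG hS, Hyp.div_mk_zero_neg_two]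
  simp only [rotF, rotG, Hyp.mk_mul_mk, Hyp.mk_sub_mk, Hyp.mk.injEq]
  constructor
  · ring
  · linear_combination (-(ε * σ) / 2) * cos_sq_add_sin_sq (S p.1)

end RotationPair

theorem ZS_generating_sequence_general (s S : ℝ → ℝ)
    (hS : ∀ x, HasDerivAt S (s x) x)
    (Fm Gm : ℤ → ℝ × ℝ → Hyp)
    (hF : ∀ (m : ℤ) (p : ℝ × ℝ),
      Fm m p = ⟨Real.cos (S p.1), (-1 : ℝ) ^ (m + 1) * Real.sin (S p.1)⟩)
    (hG : ∀ (m : ℤ) (p : ℝ × ℝ),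
      Gm m p = ⟨(-1 : ℝ) ^ m * Real.sin (S p.1), Real.cos (S p.1)⟩) :
    ∀ (m : ℤ) (p : ℝ × ℝ),
      (Hyp.conj (Fm m p) * Gm m p).im = 1 ∧
      charA (Fm m) (Gm m) p = 0 ∧
      charB (Fm (m + 1)) (Gm (m + 1)) p = -(charCapB (Fm m) (Gm m) p) ∧
      charB (Fm (m + 1)) (Gm (m + 1)) p = (⟨0, (-1 : ℝ) ^ m * (s p.1 / 2)⟩ : Hyp) ∧
      charA (Fm (m + 2)) (Gm (m + 2)) p = charA (Fm m) (Gm m) p ∧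
      charB (Fm (m + 2)) (Gm (m + 2)) p = charB (Fm m) (Gm m) p ∧
      charCapA (Fm (m + 2)) (Gm (m + 2)) p = charCapA (Fm m) (Gm m) p ∧
      charCapB (Fm (m + 2)) (Gm (m + 2)) p = charCapB (Fm m) (Gm m) p := by
  intro m p
  have hsucc : ∀ k : ℤ, (-1 : ℝ) ^ (k + 1) = -(-1) ^ k := fun k => by
    rw [zpow_add_one₀ (by norm_num), mul_neg_one]
  have hsq : ∀ k : ℤ, ((-1 : ℝ) ^ k) ^ 2 = 1 := fun k => by
    rw [← zpow_natCast, ← zpow_mul]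
    exact Even.neg_one_zpow ⟨k, by push_cast; ring⟩
  have hFm : ∀ k, Fm k = rotF ((-1) ^ k) S := fun k => funext fun q => by
    rw [hF, hsucc, neg_mul, rotF]
  have hGm : ∀ k, Gm k = rotG ((-1) ^ k) S := fun k => funext fun q => hG k q
  have hper : (-1 : ℝ) ^ (m + 2) = (-1) ^ m := by
    rw [add_comm, zpow_add₀ (by norm_num)]
    norm_num
  simp only [hFm, hGm, hper, charCapB_rot_eq_charB, charB_rot (hsq _) (hS p.1),
    charA_rot (hsq _) (hS p.1), im_conj_rotF_mul_rotG (hsq _), and_self, and_true, true_and]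
  rw [hsucc]
  simp only [Hyp.neg_mk, neg_zero, Hyp.mk.injEq, true_and]
  constructor <;> ring

/-- `F_m = cos S(x) + (-1)^{m+1} j sin S(x)`, `G_m = (-1)^m sin S(x) + j cos S(x)`
form a generating sequence: `Im(conj F_m · G_m) ≡ 1`, `a_{(F_m,G_m)} = 0`,
`b_{(F_{m+1},G_{m+1})} = -B_{(F_m,G_m)} = (-1)^m (s/2) j`, and the sequence has period 2. -/
theorem ZS_generating_sequence (s S : ℝ → ℝ) (hs : Continuous s)
    (hS : ∀ x, HasDerivAt S (s x) x)
    (Fm Gm : ℤ → ℝ × ℝ → Hyp)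
    (hF : ∀ (m : ℤ) (p : ℝ × ℝ),
      Fm m p = ⟨Real.cos (S p.1), (-1 : ℝ) ^ (m + 1) * Real.sin (S p.1)⟩)
    (hG : ∀ (m : ℤ) (p : ℝ × ℝ),
      Gm m p = ⟨(-1 : ℝ) ^ m * Real.sin (S p.1), Real.cos (S p.1)⟩) :
    ∀ (m : ℤ) (p : ℝ × ℝ),
      (Hyp.conj (Fm m p) * Gm m p).im = 1 ∧
      charA (Fm m) (Gm m) p = 0 ∧
      charB (Fm (m + 1)) (Gm (m + 1)) p = -(charCapB (Fm m) (Gm m) p) ∧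
      charB (Fm (m + 1)) (Gm (m + 1)) p = (⟨0, (-1 : ℝ) ^ m * (s p.1 / 2)⟩ : Hyp) ∧
      charA (Fm (m + 2)) (Gm (m + 2)) p = charA (Fm m) (Gm m) p ∧
      charB (Fm (m + 2)) (Gm (m + 2)) p = charB (Fm m) (Gm m) p ∧
      charCapA (Fm (m + 2)) (Gm (m + 2)) p = charCapA (Fm m) (Gm m) p ∧
      charCapB (Fm (m + 2)) (Gm (m + 2)) p = charCapB (Fm m) (Gm m) p :=
  ZS_generating_sequence_general s S hS Fm Gm hF hG
end
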